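/- Let M ⊆ S¹ be a symmetric Cantorval. Then the set M \ int(M) has no isolated points: for every z ∈ M \ int(M) there exists a sequence (xₙ) in M \ int(M) with xₙ ≠ z for all n and xₙ → z. -/

import Mathlib

open Set Topology Filter

/-- The circle. -/
abbrev S1 := AddCircle (1 : ℝ)

/-- Apply a word `l = [i₁, …, i_k]` of generators: `f i₁ ∘ ⋯ ∘ f i_k`. -/
def applyWord {X : Type*} {n : ℕ} (f : Fin n → X → X) (l : List (Fin n)) (x : X) : X :=
  l.foldr (fun i y => f i y) x

/-- The orbit of `x` under the semigroup `IFS(f₁,…,fₙ)` (nonempty words). -/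
def orbitIFS {X : Type*} {n : ℕ} (f : Fin n → X → X) (x : X) : Set X :=
  {y | ∃ l : List (Fin n), l ≠ [] ∧ y = applyWord f l x}

/-- `M` is a minimal set for the IFS generated by `f₁,…,fₙ`. -/
def IsMinimalIFS {X : Type*} [TopologicalSpace X] {n : ℕ} (f : Fin n → X → X)
    (M : Set X) : Prop :=
  M.Nonempty ∧ IsClosed M ∧ (∀ i, f i '' M ⊆ M) ∧
    ∀ x ∈ M, closure (orbitIFS f x) = M

/-- A Cantor set: nonempty, compact, perfect and totally disconnected. -/
def IsCantorSet {X : Type*} [TopologicalSpace X] (K : Set X) : Prop :=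
  K.Nonempty ∧ IsCompact K ∧ Perfect K ∧ IsTotallyDisconnected K

/-- `X` is (homeomorphic to) the circle or a (nondegenerate) closed interval. -/
def IsCircleOrInterval (X : Type*) [TopologicalSpace X] : Prop :=
  Nonempty (X ≃ₜ S1) ∨ ∃ a b : ℝ, a < b ∧ Nonempty (X ≃ₜ Set.Icc a b)

/-- The canonical decomposition `M = 𝓘 ∪ K ∪ N` of a closed set:
`𝓘` is the interior (union of components of the interior), `K` is the maximal
Cantor set contained in `M \ 𝓘` (possibly empty), and `N` is the countable remainder. -/
def IsCanonicalDecomp {X : Type*} [TopologicalSpace X] (M I K N : Set X) : Prop :=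
  I = interior M ∧
  (IsCantorSet K ∨ K = ∅) ∧
  K ⊆ M \ I ∧
  (∀ K₁ : Set X, IsCantorSet K₁ → K ⊆ K₁ → K₁ ⊆ M \ I → K₁ = K) ∧
  N = M \ (I ∪ K) ∧
  N.Countable

/-- A symmetric Cantorval: a nonempty compact set which is the closure of its interior,
and such that both endpoints of every nontrivial connected component are accumulation
points of one-point connected components. -/
def IsSymmetricCantorval {X : Type*} [TopologicalSpace X] (M : Set X) : Prop :=
  M.Nonempty ∧ IsCompact M ∧ M = closure (interior M) ∧
  ∀ x ∈ M, ¬ (connectedComponentIn M x).Subsingleton →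
    ∀ z ∈ frontier (connectedComponentIn M x),
      AccPt z (𝓟 {y | y ∈ M ∧ connectedComponentIn M y = {y}})

/-!
Let `z` be a boundary point of `M`. If the component of `z` in `M` is nontrivial, `z` lies on its
frontier, so `z` is a limit of one-point components of `M`; these are boundary points of `M`
because the circle has no isolated points. If the component of `z` is `{z}`, take an interior
point `y` of `M` close to `z`: its component does not contain `z`, so a small connected
neighbourhood of `z` containing `y` meets the frontier of that component, and every such
frontier point is a boundary point of `M`.
-/

instance (p : ℝ) : LocallyPathConnectedSpace (AddCircle p) :=
  inferInstanceAs (LocallyPathConnectedSpace (Quotient _))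

instance {p : ℝ} [Fact (0 < p)] : Nontrivial (AddCircle p) := by
  have hp : 0 < p := Fact.out
  refine ⟨0, ((p / 2 : ℝ) : AddCircle p), fun h => ?_⟩
  have := (AddCircle.coe_eq_coe_iff_of_mem_Ico (p := p) (a := 0) (x := 0) (y := p / 2)
    (by simp [hp]) (by constructor <;> linarith)).mp (by simpa using h)
  linarith

theorem AccPt.exists_seq_tendsto {X : Type*} [TopologicalSpace X] [FrechetUrysohnSpace X]
    {z : X} {s : Set X} (h : AccPt z (𝓟 s)) :
    ∃ x : ℕ → X, (∀ n, x n ∈ s ∧ x n ≠ z) ∧ Tendsto x atTop (𝓝 z) :=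
  mem_closure_iff_seq_limit.1 (accPt_principal_iff_clusterPt.1 h).mem_closure

section ConnectedComponentIn

variable {X : Type*} [TopologicalSpace X] {M : Set X}

theorem IsClosed.connectedComponentIn (hM : IsClosed M) (x : X) :
    IsClosed (connectedComponentIn M x) := by
  by_cases hx : x ∈ M
  · exact isClosed_of_closure_subset <|
      isPreconnected_connectedComponentIn.closure.subset_connectedComponentIn
        (subset_closure (mem_connectedComponentIn hx))
        (closure_minimal (connectedComponentIn_subset M x) hM)
  · rw [connectedComponentIn_eq_empty hx]
    exact isClosed_empty

variable [LocallyConnectedSpace X]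

theorem mem_interior_connectedComponentIn {x : X} (hx : x ∈ interior M) :
    x ∈ interior (connectedComponentIn M x) :=
  mem_interior_iff_mem_nhds.2 (connectedComponentIn_mem_nhds (mem_interior_iff_mem_nhds.1 hx))

theorem notMem_interior_of_connectedComponentIn_eq_singleton [PerfectSpace X] {x : X}
    (hx : connectedComponentIn M x = {x}) : x ∉ interior M := fun hxM =>
  not_isOpen_singleton x <| by
    simpa [hx] using mem_interior_connectedComponentIn hxM

theorem accPt_diff_interior_of_connectedComponentIn_subsingleton (hM : IsClosed M) {z : X}
    (hz : z ∈ closure (interior M) \ interior M)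
    (hC : (connectedComponentIn M z).Subsingleton) :
    AccPt z (𝓟 (M \ interior M)) := by
  refine accPt_iff_nhds.2 fun U hU => ?_
  obtain ⟨V, ⟨hVo, hzV, hVc⟩, hVU⟩ := (LocallyConnectedSpace.open_connected_basis z).mem_iff.1 hU
  obtain ⟨y, hyV, hyI⟩ := mem_closure_iff.1 hz.1 V hVo hzV
  have hzC : z ∉ connectedComponentIn M y := fun h => by
    have hCyz := connectedComponentIn_eq h
    exact hz.2 (hC (hCyz ▸ mem_connectedComponentIn (interior_subset hyI)) (hCyz ▸ h) ▸ hyI)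
  obtain ⟨p, ⟨hpcl, hpV⟩, hpi⟩ :
      ∃ p ∈ closure (interior (connectedComponentIn M y)) ∩ V,
        p ∉ interior (connectedComponentIn M y) := by
    by_contra! h
    exact hzC <| interior_subset <| hVc.isPreconnected.subset_of_closure_inter_subset
      isOpen_interior ⟨y, hyV, mem_interior_connectedComponentIn hyI⟩ h hzV
  have hpC : p ∈ connectedComponentIn M y :=
    (hM.connectedComponentIn y).closure_subset (closure_mono interior_subset hpcl)
  refine ⟨p, ⟨hVU hpV, connectedComponentIn_subset M y hpC, fun hpI => hpi ?_⟩,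
    fun hpz => hzC (hpz ▸ hpC)⟩
  rw [connectedComponentIn_eq hpC]
  exact mem_interior_connectedComponentIn hpI

end ConnectedComponentIn

namespace IsSymmetricCantorval

variable {X : Type*} [TopologicalSpace X] [LocallyConnectedSpace X] [PerfectSpace X] {M : Set X}

theorem accPt_diff_interior_of_not_subsingleton (hM : IsSymmetricCantorval M) {z : X}
    (hz : z ∈ M \ interior M) (hC : ¬(connectedComponentIn M z).Subsingleton) :
    AccPt z (𝓟 (M \ interior M)) := by
  have hzC : z ∈ frontier (connectedComponentIn M z) :=
    ⟨subset_closure (mem_connectedComponentIn hz.1),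
      fun h => hz.2 (interior_mono (connectedComponentIn_subset M z) h)⟩
  exact (hM.2.2.2 z hz.1 hC z hzC).mono <| principal_mono.2 fun p hp =>
    ⟨hp.1, notMem_interior_of_connectedComponentIn_eq_singleton hp.2⟩

theorem accPt_diff_interior (hM : IsSymmetricCantorval M) {z : X} (hz : z ∈ M \ interior M) :
    AccPt z (𝓟 (M \ interior M)) := by
  by_cases hC : (connectedComponentIn M z).Subsingleton
  · have hMcl : M = closure (interior M) := hM.2.2.1
    exact accPt_diff_interior_of_connectedComponentIn_subsingleton
      (hMcl ▸ isClosed_closure) ⟨hMcl ▸ hz.1, hz.2⟩ hC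
  · exact hM.accPt_diff_interior_of_not_subsingleton hz hC

end IsSymmetricCantorval

theorem stmt6 (M : Set S1) (hM : IsSymmetricCantorval M) :
    ∀ z ∈ M \ interior M, ∃ x : ℕ → S1,
      (∀ k, x k ∈ M \ interior M ∧ x k ≠ z) ∧
      Filter.Tendsto x Filter.atTop (𝓝 z) :=
  fun _ hz => (hM.accPt_diff_interior hz).exists_seq_tendsto
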